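/- Fix positive constants κ̄, Rg, T∞, ρl, R*, σ, ρ*, p∞, a real constant μl ≥ 0, and γ > 1, satisfying the equilibrium relation Rg·T∞·ρ* = p∞ + 2σ/R*. Let τ = ξ + iη ∈ ℂ with η ≠ 0 and τ ≠ −π²κ̄j² for all integers j ≥ 1. If Q(τ) = 0, then 2·ρl·R*·ξ + 4μl/R* < 0; in particular ξ < −2μl/(ρl·R*²) ≤ 0. -/

import Mathlib

open Real Complex

/-- The meromorphic function `Q` from the linearized bubble dynamics. -/
noncomputable def Q (κ Rg T ρl Rs σ ρs μl γ : ℝ) (τ : ℂ) : ℂ :=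
  ((1 / (Rg * T) : ℝ) : ℂ) *
      (((4 * Real.pi / (3 * γ) : ℝ) : ℂ) +
        ((8 * (γ - 1) / (Real.pi * γ) : ℝ) : ℂ) *
          ∑' j : ℕ+, ((Real.pi ^ 2 * κ : ℝ) : ℂ) /
            (((Real.pi ^ 2 * κ * ((j : ℕ) : ℝ) ^ 2 : ℝ) : ℂ) + τ)) *
      (((ρl * Rs : ℝ) : ℂ) * τ ^ 2 + ((4 * μl / Rs : ℝ) : ℂ) * τ - ((2 * σ / Rs ^ 2 : ℝ) : ℂ)) +
    ((4 * Real.pi * ρs / Rs : ℝ) : ℂ)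

theorem nonreal_roots_of_Q_real_part_bound (κ Rg T ρl Rs σ ρs pinf μl γ : ℝ)
    (hκ : 0 < κ) (hRg : 0 < Rg) (hT : 0 < T) (hρl : 0 < ρl) (hRs : 0 < Rs)
    (hσ : 0 < σ) (hρs : 0 < ρs) (hp : 0 < pinf) (hμl : 0 ≤ μl) (hγ : 1 < γ)
    (heq : Rg * T * ρs = pinf + 2 * σ / Rs)
    (τ : ℂ) (hτim : τ.im ≠ 0)
    (hτ : ∀ j : ℕ+, τ ≠ -(((Real.pi ^ 2 * κ * ((j : ℕ) : ℝ) ^ 2 : ℝ) : ℂ)))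
    (hQ : Q κ Rg T ρl Rs σ ρs μl γ τ = 0) :
    2 * ρl * Rs * τ.re + 4 * μl / Rs < 0 ∧
    τ.re < -(2 * μl / (ρl * Rs ^ 2)) ∧ -(2 * μl / (ρl * Rs ^ 2)) ≤ 0 := by
  have hπ := Real.pi_pos
  have hγ0 : 0 < γ := by linarith
  have hγ1 : 0 < γ - 1 := by linarith
  simp only [Q] at hQ
  set c : ℝ := Real.pi ^ 2 * κ with hcdef
  have hc : 0 < c := by positivity
  set f : ℕ+ → ℂ := fun j => ((c : ℝ) : ℂ) /
      (((c * ((j : ℕ) : ℝ) ^ 2 : ℝ) : ℂ) + τ) with hfdef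
  -- denominators are nonzero
  have hden : ∀ j : ℕ+, (((c * ((j : ℕ) : ℝ) ^ 2 : ℝ)) : ℂ) + τ ≠ 0 := by
    intro j h
    apply hτim
    have h2 := congrArg Complex.im h
    simp only [Complex.add_im, Complex.ofReal_im, Complex.zero_im, zero_add] at h2
    exact h2
  have hτ0 : τ ≠ 0 := fun h => hτim (by simp [h])
  have hτn : 0 < ‖τ‖ := norm_pos_iff.mpr hτ0
  have hηpos : 0 < |τ.im| := abs_pos.mpr hτim
  set m : ℝ := min (c * |τ.im| / (2 * ‖τ‖)) (c / 2) with hmdef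
  have hm : 0 < m := lt_min (by positivity) (by positivity)
  -- bound on terms
  have hub : ∀ j : ℕ+, ‖f j‖ ≤ c / m * (1 / ((j : ℕ) : ℝ) ^ 2) := by
    intro j
    have hj1 : (1 : ℝ) ≤ ((j : ℕ) : ℝ) := by exact_mod_cast j.one_le
    have hjpos : 0 < ((j : ℕ) : ℝ) ^ 2 := by positivity
    have hlow : m * ((j : ℕ) : ℝ) ^ 2 ≤ ‖(((c * ((j : ℕ) : ℝ) ^ 2 : ℝ)) : ℂ) + τ‖ := by
      rcases le_or_gt (c * ((j : ℕ) : ℝ) ^ 2) (2 * ‖τ‖) with h | h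
      · have him : |τ.im| ≤ ‖(((c * ((j : ℕ) : ℝ) ^ 2 : ℝ)) : ℂ) + τ‖ := by
          have h2 := Complex.abs_im_le_norm ((((c * ((j : ℕ) : ℝ) ^ 2 : ℝ)) : ℂ) + τ)
          rw [Complex.add_im, Complex.ofReal_im, zero_add] at h2
          exact h2
        have h1 : m ≤ c * |τ.im| / (2 * ‖τ‖) := min_le_left _ _
        rw [le_div_iff₀ (by positivity)] at h1
        have h3 : m * ((j : ℕ) : ℝ) ^ 2 ≤ |τ.im| := by
          nlinarith [mul_le_mul_of_nonneg_left h hm.le]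
        linarith
      · have h2 : ‖(((c * ((j : ℕ) : ℝ) ^ 2 : ℝ)) : ℂ)‖ = c * ((j : ℕ) : ℝ) ^ 2 := by
          rw [Complex.norm_real, Real.norm_eq_abs]
          exact abs_of_nonneg (by positivity)
        have h3 := norm_sub_norm_le ((((c * ((j : ℕ) : ℝ) ^ 2 : ℝ)) : ℂ)) (-τ)
        rw [sub_neg_eq_add, norm_neg, h2] at h3
        have h4 : m ≤ c / 2 := min_le_right _ _
        nlinarith [mul_le_mul_of_nonneg_right h4 hjpos.le]
    have hnf : ‖f j‖ = c / ‖(((c * ((j : ℕ) : ℝ) ^ 2 : ℝ)) : ℂ) + τ‖ := by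
      simp only [hfdef, norm_div, Complex.norm_real, Real.norm_eq_abs, abs_of_pos hc]
    rw [hnf]
    have hstep : c / ‖(((c * ((j : ℕ) : ℝ) ^ 2 : ℝ)) : ℂ) + τ‖ ≤
        c / (m * ((j : ℕ) : ℝ) ^ 2) := by
      gcongr
    have hstep2 : c / (m * ((j : ℕ) : ℝ) ^ 2) = c / m * (1 / ((j : ℕ) : ℝ) ^ 2) := by
      rw [div_mul_div_comm, mul_one]
    linarith [hstep, hstep2.ge]
  -- summability
  have hg : Summable (fun j : ℕ+ => c / m * (1 / ((j : ℕ) : ℝ) ^ 2)) := by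
    have h1 : Summable (fun n : ℕ => c / m * (1 / (n : ℝ) ^ 2)) :=
      (Real.summable_one_div_nat_pow.mpr one_lt_two).mul_left _
    exact h1.comp_injective PNat.coe_injective
  have hf : Summable f := Summable.of_norm_bounded hg hub
  set S : ℂ := ∑' j : ℕ+, f j with hSdef
  have hS : HasSum f S := hf.hasSum
  have hSim : HasSum (fun j => (f j).im) S.im := ((Complex.hasSum_iff f S).mp hS).2
  set t : ℕ+ → ℝ := fun j => c / Complex.normSq ((((c * ((j : ℕ) : ℝ) ^ 2 : ℝ)) : ℂ) + τ)
    with htdef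
  have htpos : ∀ j, 0 < t j := by
    intro j
    have h := Complex.normSq_pos.mpr (hden j)
    exact div_pos hc h
  have him : ∀ j : ℕ+, (f j).im = -τ.im * t j := by
    intro j
    simp only [hfdef, htdef, Complex.div_im, Complex.ofReal_im, Complex.ofReal_re,
      Complex.add_im, Complex.add_re]
    ring
  simp only [him] at hSim
  have ht : HasSum t ((-τ.im)⁻¹ * S.im) := by
    have h1 := hSim.mul_left (-τ.im)⁻¹
    have heq2 : (fun j => (-τ.im)⁻¹ * (-τ.im * t j)) = t := by
      funext j
      rw [← mul_assoc, inv_mul_cancel₀ (neg_ne_zero.mpr hτim), one_mul]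
    rwa [heq2] at h1
  set Tv : ℝ := (-τ.im)⁻¹ * S.im with hTvdef
  have hTpos : 0 < Tv := by
    rw [← ht.tsum_eq]
    exact Summable.tsum_pos ht.summable (fun j => (htpos j).le) 1 (htpos 1)
  have hSimval : S.im = -τ.im * Tv := by
    rw [hTvdef, ← mul_assoc, mul_inv_cancel₀ (neg_ne_zero.mpr hτim), one_mul]
  -- main algebra
  set a : ℝ := 4 * Real.pi / (3 * γ) with hadef
  set b : ℝ := 8 * (γ - 1) / (Real.pi * γ) with hbdef
  set C : ℝ := 4 * Real.pi * ρs / Rs with hCdef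
  have hb : 0 < b := by rw [hbdef]; positivity
  have hC : 0 < C := by rw [hCdef]; positivity
  set P : ℂ := ((ρl * Rs : ℝ) : ℂ) * τ ^ 2 + ((4 * μl / Rs : ℝ) : ℂ) * τ -
    ((2 * σ / Rs ^ 2 : ℝ) : ℂ) with hPdef
  set u : ℂ := ((a : ℝ) : ℂ) + ((b : ℝ) : ℂ) * S with hudef
  have hK0 : 0 < C * (Rg * T) := by positivity
  have hup : u * P = -(((C * (Rg * T) : ℝ)) : ℂ) := by
    have hQ' := hQ
    have e : ((Rg : ℝ) : ℂ) * ((T : ℝ) : ℂ) * (((Rg : ℝ) : ℂ) * ((T : ℝ) : ℂ))⁻¹ = 1 :=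
      mul_inv_cancel₀ (by
        exact_mod_cast mul_ne_zero (ne_of_gt hRg) (ne_of_gt hT))
    push_cast at hQ' ⊢
    linear_combination (((Rg : ℝ) : ℂ) * ((T : ℝ) : ℂ)) * hQ' - u * P * e
  have hu0 : u ≠ 0 := by
    intro h
    rw [h, zero_mul] at hup
    have h0 : ((C * (Rg * T) : ℝ) : ℂ) = 0 := by linear_combination hup
    exact absurd (Complex.ofReal_eq_zero.mp h0) (ne_of_gt hK0)
  have hnsq : 0 < Complex.normSq u := Complex.normSq_pos.mpr hu0
  have hPeq : P = -(((C * (Rg * T) : ℝ)) : ℂ) / u := by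
    rw [eq_div_iff hu0]
    linear_combination hup
  have hPim1 : P.im = (C * (Rg * T)) * u.im / Complex.normSq u := by
    rw [hPeq, Complex.div_im]
    simp only [Complex.neg_im, Complex.neg_re, Complex.ofReal_im, Complex.ofReal_re]
    ring
  have huim : u.im = b * S.im := by
    rw [hudef]
    simp only [Complex.add_im, Complex.mul_im, Complex.ofReal_im, Complex.ofReal_re]
    ring
  have hPim2 : P.im = τ.im * (2 * ρl * Rs * τ.re + 4 * μl / Rs) := by
    rw [hPdef]
    simp only [Complex.sub_im, Complex.add_im, Complex.mul_im, Complex.mul_re,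
      Complex.ofReal_im, Complex.ofReal_re, pow_two]
    ring
  have hX : 2 * ρl * Rs * τ.re + 4 * μl / Rs =
      -((C * (Rg * T)) * b * Tv / Complex.normSq u) := by
    apply mul_left_cancel₀ hτim
    rw [← hPim2, hPim1, huim, hSimval]
    ring
  have hpos : 0 < (C * (Rg * T)) * b * Tv / Complex.normSq u := by positivity
  have hXneg : 2 * ρl * Rs * τ.re + 4 * μl / Rs < 0 := by rw [hX]; linarith
  refine ⟨hXneg, ?_, ?_⟩
  · have e : 2 * ρl * Rs * (τ.re + 2 * μl / (ρl * Rs ^ 2)) =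
        2 * ρl * Rs * τ.re + 4 * μl / Rs := by
      field_simp
      ring
    have h2 : (0:ℝ) < 2 * ρl * Rs := by positivity
    by_contra hcon
    push_neg at hcon
    have h5 : 0 ≤ τ.re + 2 * μl / (ρl * Rs ^ 2) := by linarith
    have h4 : 0 ≤ 2 * ρl * Rs * (τ.re + 2 * μl / (ρl * Rs ^ 2)) := mul_nonneg h2.le h5
    rw [e] at h4
    linarith
  · have h6 : 0 ≤ 2 * μl / (ρl * Rs ^ 2) := div_nonneg (by linarith) (by positivity)
    linarith
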